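/- Let G be a compact Lie group, and let CSC(G) be the set of closed subgroups of G modulo conjugation. The relation [A] ≤ [B] defined by 'there exists g ∈ G with gAg⁻¹ ⊆ B' is a partial order on CSC(G); in particular it is antisymmetric. -/

import Mathlib

/-- The type of closed subgroups of a topological group. -/
def ClosedSub (G : Type*) [Group G] [TopologicalSpace G] : Type _ :=
  {K : Subgroup G // IsClosed (K : Set G)}

/-- Conjugacy relation on closed subgroups. -/
def conjRel {G : Type*} [Group G] [TopologicalSpace G] (A B : ClosedSub G) : Prop :=
  ∃ g : G, Subgroup.map (MulAut.conj g).toMonoidHom A.1 = B.1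

/-- The set of closed subgroups of `G` modulo conjugation. -/
def CSC (G : Type*) [Group G] [TopologicalSpace G] : Type _ :=
  Quot (conjRel (G := G))

/-- The relation `[A] ≤ [B]` iff some conjugate of a representative of `[A]` is
contained in a representative of `[B]`. -/
def CSCle {G : Type*} [Group G] [TopologicalSpace G] (x y : CSC G) : Prop :=
  ∃ A B : ClosedSub G, Quot.mk _ A = x ∧ Quot.mk _ B = y ∧
    ∃ g : G, Subgroup.map (MulAut.conj g).toMonoidHom A.1 ≤ B.1

/-!
Conjugation-into is a preorder on closed subgroups, and `[·] ≤ [·]` is its image on conjugacy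
classes, so the only point is antisymmetry. If `gAg⁻¹ ⊆ B` and `hBh⁻¹ ⊆ A`, then `c = hg`
satisfies `cAc⁻¹ ⊆ A`. The elements conjugating `A` into itself form a closed submonoid, and in a
compact group a closed submonoid is a subgroup, because `c⁻¹` is a cluster point of the powers
`cⁿ`. Hence also `c⁻¹Ac ⊆ A`, so `cAc⁻¹ = A`, which forces `hBh⁻¹ = A`.
-/

open Set

namespace Subgroup

variable {G : Type*} [Group G]

theorem map_conj_mul (a b : G) (K : Subgroup G) :
    K.map (MulAut.conj (a * b)).toMonoidHom
      = (K.map (MulAut.conj b).toMonoidHom).map (MulAut.conj a).toMonoidHom := by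
  rw [map_map, map_mul]
  rfl

theorem map_conj_one (K : Subgroup G) : K.map (MulAut.conj (1 : G)).toMonoidHom = K := by
  rw [map_one]
  exact map_id K

theorem map_conj_inv_map_conj (a : G) (K : Subgroup G) :
    (K.map (MulAut.conj a).toMonoidHom).map (MulAut.conj a⁻¹).toMonoidHom = K := by
  rw [← map_conj_mul, inv_mul_cancel, map_conj_one]

def conjIntoSelf (K : Subgroup G) : Submonoid G where
  carrier := {g | K.map (MulAut.conj g).toMonoidHom ≤ K}
  mul_mem' {a b} ha hb := by
    simp only [mem_ofPred_eq, map_conj_mul] at ha hb ⊢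
    exact (map_mono hb).trans ha
  one_mem' := (map_conj_one K).le

theorem mem_conjIntoSelf_iff {K : Subgroup G} {g : G} :
    g ∈ K.conjIntoSelf ↔ ∀ k ∈ K, g * k * g⁻¹ ∈ K := by
  simp [conjIntoSelf, SetLike.le_def]

theorem isClosed_conjIntoSelf [TopologicalSpace G] [IsTopologicalGroup G] {K : Subgroup G}
    (hK : IsClosed (K : Set G)) : IsClosed (K.conjIntoSelf : Set G) := by
  have : (K.conjIntoSelf : Set G) = ⋂ k ∈ K, (fun g ↦ g * k * g⁻¹) ⁻¹' K := by
    ext g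
    simp [mem_conjIntoSelf_iff]
  rw [this]
  exact isClosed_biInter fun k _ ↦ hK.preimage (by fun_prop)

end Subgroup

section Compact

variable {G : Type*} [Group G] [TopologicalSpace G] [IsTopologicalGroup G] [CompactSpace G]

theorem inv_mem_closure_range_pow (g : G) : g⁻¹ ∈ closure (range (g ^ · : ℕ → G)) := by
  rw [← closure_range_zpow_eq_pow]
  exact subset_closure ⟨-1, zpow_neg_one g⟩

theorem Submonoid.inv_mem_of_isClosed {S : Submonoid G} (hS : IsClosed (S : Set G)) {g : G}
    (hg : g ∈ S) : g⁻¹ ∈ S :=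
  closure_minimal (range_subset_iff.2 fun n ↦ S.pow_mem hg n) hS (inv_mem_closure_range_pow g)

theorem Subgroup.map_conj_eq_of_le {K : Subgroup G} (hK : IsClosed (K : Set G)) {g : G}
    (h : K.map (MulAut.conj g).toMonoidHom ≤ K) : K.map (MulAut.conj g).toMonoidHom = K := by
  have hinv : K.map (MulAut.conj g⁻¹).toMonoidHom ≤ K :=
    Submonoid.inv_mem_of_isClosed (isClosed_conjIntoSelf hK) (show g ∈ K.conjIntoSelf from h)
  refine h.antisymm ?_
  calc K = (K.map (MulAut.conj g⁻¹).toMonoidHom).map (MulAut.conj g).toMonoidHom := by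
        rw [← map_conj_mul, mul_inv_cancel, map_conj_one]
    _ ≤ K.map (MulAut.conj g).toMonoidHom := map_mono hinv

end Compact

theorem conjRel_equivalence {G : Type*} [Group G] [TopologicalSpace G] :
    Equivalence (conjRel (G := G)) where
  refl A := ⟨1, Subgroup.map_conj_one _⟩
  symm := fun ⟨g, hg⟩ ↦ ⟨g⁻¹, by rw [← hg, Subgroup.map_conj_inv_map_conj]⟩
  trans := fun ⟨g, hg⟩ ⟨h, hh⟩ ↦ ⟨h * g, by rw [Subgroup.map_conj_mul, hg, hh]⟩

namespace ClosedSub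

variable {G : Type*} [Group G] [TopologicalSpace G]

def ConjLE (A B : ClosedSub G) : Prop :=
  ∃ g : G, A.1.map (MulAut.conj g).toMonoidHom ≤ B.1

theorem ConjLE.refl (A : ClosedSub G) : A.ConjLE A :=
  ⟨1, (Subgroup.map_conj_one _).le⟩

theorem ConjLE.trans {A B C : ClosedSub G} : A.ConjLE B → B.ConjLE C → A.ConjLE C
  | ⟨g, hg⟩, ⟨h, hh⟩ =>
    ⟨h * g, by rw [Subgroup.map_conj_mul]; exact (Subgroup.map_mono hg).trans hh⟩

theorem ConjLE.of_mk_eq {A B : ClosedSub G}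
    (h : Quot.mk conjRel A = Quot.mk conjRel B) : A.ConjLE B :=
  let ⟨g, hg⟩ := conjRel_equivalence.eqvGen_iff.mp (Quot.eqvGen_exact h)
  ⟨g, hg.le⟩

theorem conjRel_of_conjLE_of_conjLE [IsTopologicalGroup G] [CompactSpace G] {A B : ClosedSub G} :
    A.ConjLE B → B.ConjLE A → conjRel B A
  | ⟨g, hg⟩, ⟨h, hh⟩ => by
    have hA : A.1.map (MulAut.conj (h * g)).toMonoidHom = A.1 :=
      Subgroup.map_conj_eq_of_le A.2 <| by
        rw [Subgroup.map_conj_mul]; exact (Subgroup.map_mono hg).trans hh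
    refine ⟨h, hh.antisymm ?_⟩
    calc A.1 = (A.1.map (MulAut.conj g).toMonoidHom).map (MulAut.conj h).toMonoidHom := by
          rw [← Subgroup.map_conj_mul, hA]
      _ ≤ B.1.map (MulAut.conj h).toMonoidHom := Subgroup.map_mono hg

end ClosedSub

theorem CSCle_mk_iff {G : Type*} [Group G] [TopologicalSpace G] {A B : ClosedSub G} :
    CSCle (Quot.mk _ A) (Quot.mk _ B) ↔ A.ConjLE B := by
  constructor
  · rintro ⟨A', B', hA', hB', hA'B'⟩
    exact (ClosedSub.ConjLE.of_mk_eq hA'.symm).trans <|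
      ClosedSub.ConjLE.trans hA'B' (.of_mk_eq hB')
  · exact fun h ↦ ⟨A, B, rfl, rfl, h⟩

theorem CSCle_isPartialOrder_general
    {E : Type*} [NormedAddCommGroup E] [NormedSpace ℝ E]
    {M : Type*} [TopologicalSpace M] {I : ModelWithCorners ℝ E M}
    {G : Type*} [TopologicalSpace G] [ChartedSpace M G] [Group G] [LieGroup I (⊤ : ℕ∞) G]
    [CompactSpace G] :
    IsPartialOrder (CSC G) (CSCle (G := G)) := by
  have := topologicalGroup_of_lieGroup (G := G) I (⊤ : ℕ∞)
  refine { refl := ?_, trans := ?_, antisymm := ?_ }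
  · rintro ⟨A⟩
    exact CSCle_mk_iff.2 (.refl A)
  · rintro ⟨A⟩ ⟨B⟩ ⟨C⟩ hAB hBC
    exact CSCle_mk_iff.2 ((CSCle_mk_iff.1 hAB).trans (CSCle_mk_iff.1 hBC))
  · rintro ⟨A⟩ ⟨B⟩ hAB hBA
    exact (Quot.sound <|
      ClosedSub.conjRel_of_conjLE_of_conjLE (CSCle_mk_iff.1 hAB) (CSCle_mk_iff.1 hBA)).symm

/-- For a compact Lie group `G`, the relation `≤` is a partial order on `CSC G`;
in particular it is antisymmetric. -/
theorem CSCle_isPartialOrder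
    {E : Type*} [NormedAddCommGroup E] [NormedSpace ℝ E] [FiniteDimensional ℝ E]
    {M : Type*} [TopologicalSpace M] {I : ModelWithCorners ℝ E M}
    {G : Type*} [TopologicalSpace G] [ChartedSpace M G] [Group G] [LieGroup I (⊤ : ℕ∞) G]
    [CompactSpace G] :
    IsPartialOrder (CSC G) (CSCle (G := G)) :=
  CSCle_isPartialOrder_general (I := I)
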